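/- Let b ≥ 2 and suppose the excluded digit set {0,...,b−1} \ 𝒜 (of size s) is a disjoint union of k intervals of integers. Then for every real x, |Ĉ_{b^N}(x)| ≤ ∏_{i=0}^{N−1} min{b−s, (k+1)/(2‖b^i x‖)}. -/

import Mathlib

open Finset

/-- The standard complex exponential `e(x) = exp(2πix)`. -/
noncomputable def e (x : ℝ) : ℂ := Complex.exp (2 * (Real.pi : ℂ) * Complex.I * (x : ℂ))

/-- Distance from a real number to the nearest integer. -/
noncomputable def nint (x : ℝ) : ℝ := |x - round x|

/-- Fourier transform of the indicator of integers `n < b^N` all of whose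
base-`b` digits lie in `A`. -/
noncomputable def Chat (b : ℕ) (A : Finset ℕ) (N : ℕ) (x : ℝ) : ℂ :=
  ∑ n ∈ (Finset.range (b ^ N)).filter (fun n => ∀ i < N, n / b ^ i % b ∈ A), e (n * x)

/-- The excluded digit set `{0,...,b-1} \ A` is a disjoint union of `k`
(nonempty) intervals of integers. -/
def ExcludedUnionIntervals (b k : ℕ) (A : Finset ℕ) : Prop :=
  ∃ l r : Fin k → ℕ, (∀ i, l i ≤ r i) ∧
    (∀ i j, i ≠ j → Disjoint (Finset.Icc (l i) (r i)) (Finset.Icc (l j) (r j))) ∧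
    Finset.range b \ A = Finset.univ.biUnion (fun i => Finset.Icc (l i) (r i))

/-! Digits in different positions vary independently, so `Chat` factors as a product over the
positions `i < N` of the digit sums `∑_{d ∈ A} e(d bⁱ x)`. Each factor has at most `|A| = b - s`
terms of modulus one. Alternatively, `A` is `{0, …, b-1}` with `k` intervals removed, so a digit
sum is a signed combination of `k + 1` geometric sums, each of modulus at most `1 / (2‖θ‖)`
because `|e(θ) - 1| = 2|sin πθ| ≥ 4‖θ‖`. -/

lemma e_add (x y : ℝ) : e (x + y) = e x * e y := by
  rw [e, e, e, ← Complex.exp_add]; push_cast; ring_nf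

lemma e_intCast (n : ℤ) : e n = 1 := by
  rw [e, ← Complex.exp_int_mul_two_pi_mul_I n]; push_cast; ring_nf

lemma e_natCast_mul (n : ℕ) (x : ℝ) : e (n * x) = e x ^ n := by
  induction n with
  | zero => simp [e]
  | succ m ih => rw [Nat.cast_succ, add_mul, one_mul, e_add, ih, pow_succ]

lemma e_eq_exp_I_mul (x : ℝ) : e x = Complex.exp (Complex.I * ((2 * Real.pi * x : ℝ) : ℂ)) := by
  rw [e]; push_cast; ring_nf

lemma norm_e (x : ℝ) : ‖e x‖ = 1 := by
  rw [e_eq_exp_I_mul, mul_comm, Complex.norm_exp_ofReal_mul_I]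

lemma norm_e_sub_one (x : ℝ) : ‖e x - 1‖ = 2 * |Real.sin (Real.pi * x)| := by
  rw [e_eq_exp_I_mul, Complex.norm_exp_I_mul_ofReal_sub_one, norm_mul, Real.norm_eq_abs,
    Real.norm_eq_abs, abs_two]
  ring_nf

lemma four_mul_nint_le_norm_e_sub_one (θ : ℝ) : 4 * nint θ ≤ ‖e θ - 1‖ := by
  set t := θ - round θ with ht
  have he : e θ = e t := by rw [ht, sub_eq_add_neg, e_add, ← Int.cast_neg, e_intCast, mul_one]
  have hpt : |Real.pi * t| ≤ Real.pi / 2 := by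
    rw [abs_mul, abs_of_pos Real.pi_pos]
    nlinarith [abs_sub_round θ, Real.pi_pos]
  have hjordan := Real.mul_abs_le_abs_sin hpt
  rw [abs_mul, abs_of_pos Real.pi_pos] at hjordan
  rw [he, norm_e_sub_one, nint, ← ht]
  field_simp at hjordan
  nlinarith [Real.pi_pos]

lemma norm_geom_sum_le {z : ℂ} (hz : ‖z‖ = 1) (hz1 : z ≠ 1) (n : ℕ) :
    ‖∑ j ∈ range n, z ^ j‖ ≤ 2 / ‖z - 1‖ := by
  rw [geom_sum_eq hz1, norm_div]
  gcongr
  calc ‖z ^ n - 1‖ ≤ ‖z ^ n‖ + ‖(1 : ℂ)‖ := norm_sub_le _ _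
    _ = 2 := by rw [norm_pow, hz, one_pow, norm_one]; norm_num

lemma norm_sum_Ico_e_le {θ : ℝ} (hθ : nint θ ≠ 0) (a a' : ℕ) :
    ‖∑ c ∈ Ico a a', e (c * θ)‖ ≤ 1 / (2 * nint θ) := by
  have hpos : 0 < nint θ := lt_of_le_of_ne (abs_nonneg _) (Ne.symm hθ)
  have hden := four_mul_nint_le_norm_e_sub_one θ
  have hne : e θ ≠ 1 := fun h => by rw [h, sub_self, norm_zero] at hden; linarith
  have hshift : ∀ j ∈ range (a' - a), e ((a + j : ℕ) * θ) = e (a * θ) * e θ ^ j := by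
    intro j _
    rw [Nat.cast_add, add_mul, e_add, e_natCast_mul, e_natCast_mul]
  rw [sum_Ico_eq_sum_range, sum_congr rfl hshift, ← mul_sum, norm_mul, norm_e, one_mul]
  calc ‖∑ j ∈ range (a' - a), e θ ^ j‖ ≤ 2 / ‖e θ - 1‖ := norm_geom_sum_le (norm_e θ) hne _
    _ ≤ 2 / (4 * nint θ) := by gcongr
    _ = 1 / (2 * nint θ) := by field_simp; ring

lemma norm_sum_e_le_card (A : Finset ℕ) (θ : ℝ) : ‖∑ d ∈ A, e (d * θ)‖ ≤ A.card := by
  simpa [norm_e] using norm_sum_le A fun d : ℕ => e (d * θ)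

lemma norm_sum_e_le_of_excludedUnionIntervals {b k : ℕ} {A : Finset ℕ} (hA : A ⊆ range b)
    (hk : ExcludedUnionIntervals b k A) {θ : ℝ} (hθ : nint θ ≠ 0) :
    ‖∑ d ∈ A, e (d * θ)‖ ≤ ((k : ℝ) + 1) / (2 * nint θ) := by
  obtain ⟨l, r, -, hdisj, hexcl⟩ := hk
  have hsplit : ∑ d ∈ A, e (d * θ) =
      ∑ d ∈ Ico 0 b, e (d * θ) - ∑ i, ∑ d ∈ Ico (l i) (r i + 1), e (d * θ) := by
    simp only [← range_eq_Ico, Ico_add_one_right_eq_Icc]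
    rw [← sum_biUnion fun i _ j _ hij => hdisj i j hij, ← hexcl, eq_sub_iff_add_eq, add_comm,
      sum_sdiff hA]
  have hexcl_bound : ‖∑ i, ∑ d ∈ Ico (l i) (r i + 1), e (d * θ)‖ ≤ k * (1 / (2 * nint θ)) :=
    calc _ ≤ ∑ i, ‖∑ d ∈ Ico (l i) (r i + 1), e (d * θ)‖ := norm_sum_le _ _
      _ ≤ ∑ _i : Fin k, 1 / (2 * nint θ) := sum_le_sum fun i _ => norm_sum_Ico_e_le hθ _ _
      _ = k * (1 / (2 * nint θ)) := by simp
  rw [hsplit]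
  calc _ ≤ _ := norm_sub_le _ _
    _ ≤ 1 / (2 * nint θ) + k * (1 / (2 * nint θ)) :=
        add_le_add (norm_sum_Ico_e_le hθ 0 b) hexcl_bound
    _ = ((k : ℝ) + 1) / (2 * nint θ) := by ring

lemma digits_mem_succ_iff {b : ℕ} (hb : 0 < b) (A : Finset ℕ) (N n : ℕ) :
    (n < b ^ (N + 1) ∧ ∀ i < N + 1, n / b ^ i % b ∈ A) ↔
      n % b ∈ A ∧ n / b < b ^ N ∧ ∀ i < N, n / b / b ^ i % b ∈ A := by
  have hdigit : ∀ i, n / b ^ (i + 1) = n / b / b ^ i := fun i => by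
    rw [pow_succ', Nat.div_div_eq_div_mul]
  rw [pow_succ, ← Nat.div_lt_iff_lt_mul hb, Nat.forall_lt_succ_left, pow_zero, Nat.div_one]
  simp only [hdigit]
  tauto

lemma Chat_succ {b : ℕ} (hb : 0 < b) {A : Finset ℕ} (hA : A ⊆ range b) (N : ℕ) (x : ℝ) :
    Chat b A (N + 1) x = (∑ d ∈ A, e (d * x)) * Chat b A N (b * x) := by
  have hlow : ∀ d ∈ A, d < b := fun d hd => mem_range.mp (hA hd)
  rw [Chat, Chat, sum_mul_sum, ← sum_product']
  refine sum_nbij' (fun n => (n % b, n / b)) (fun p => p.1 + b * p.2) ?_ ?_ ?_ ?_ ?_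
  · intro n hn
    simp only [mem_filter, mem_range, digits_mem_succ_iff hb] at hn
    simpa [mem_product] using hn
  · rintro ⟨d, m⟩ hp
    simp only [mem_product, mem_filter, mem_range] at hp
    simp only [mem_filter, mem_range, digits_mem_succ_iff hb,
      Nat.add_mul_mod_self_left, Nat.add_mul_div_left _ _ hb, Nat.mod_eq_of_lt (hlow d hp.1),
      Nat.div_eq_of_lt (hlow d hp.1), zero_add]
    exact hp
  · intro n _
    exact Nat.mod_add_div n b
  · rintro ⟨d, m⟩ hp
    rw [mem_product] at hp
    simp [Nat.add_mul_div_left _ _ hb, Nat.mod_eq_of_lt (hlow d hp.1),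
      Nat.div_eq_of_lt (hlow d hp.1)]
  · intro n _
    have hn : (n : ℝ) = (n % b : ℕ) + b * (n / b : ℕ) := by
      exact_mod_cast (Nat.mod_add_div n b).symm
    rw [← e_add, hn]
    ring_nf

lemma Chat_eq_prod {b : ℕ} (hb : 0 < b) {A : Finset ℕ} (hA : A ⊆ range b) (N : ℕ) (x : ℝ) :
    Chat b A N x = ∏ i ∈ range N, ∑ d ∈ A, e (d * ((b : ℝ) ^ i * x)) := by
  induction N generalizing x with
  | zero => simp [Chat, e]
  | succ N ih =>
    rw [Chat_succ hb hA, ih, prod_range_succ']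
    simp only [pow_succ, pow_zero, one_mul, mul_assoc]
    ring

theorem stmt3 (b s k N : ℕ) (A : Finset ℕ) (hb : 2 ≤ b) (hs : s ≤ b)
    (hA : A ⊆ Finset.range b) (hcard : A.card = b - s)
    (hk : ExcludedUnionIntervals b k A) (x : ℝ) :
    ‖Chat b A N x‖ ≤
      ∏ i ∈ Finset.range N,
        (if nint ((b : ℝ) ^ i * x) = 0 then ((b : ℝ) - s)
         else min ((b : ℝ) - s) (((k : ℝ) + 1) / (2 * nint ((b : ℝ) ^ i * x)))) := by
  rw [Chat_eq_prod (by omega) hA, norm_prod]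
  refine prod_le_prod (fun _ _ => norm_nonneg _) fun i _ => ?_
  have hcard_bound : ‖∑ d ∈ A, e (d * ((b : ℝ) ^ i * x))‖ ≤ (b : ℝ) - s := by
    simpa [hcard, Nat.cast_sub hs] using norm_sum_e_le_card A ((b : ℝ) ^ i * x)
  split_ifs with h
  · exact hcard_bound
  · exact le_min hcard_bound (norm_sum_e_le_of_excludedUnionIntervals hA hk h)
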